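/- arXiv:2312.12782 — 4 statements merged into one kernel-verified Lean document; each statement's English description precedes it below -/
import Mathlib

section
/- Suppose α_t ≤ (1 - ρ)/2 where ρ = ‖S‖ < 1, and suppose for all nonzero f ∈ L²₀(M₁): t(1 - ⟨f, Ŝf⟩/‖f‖²) ≥ 1 - ⟨f, Sf⟩/‖f‖² - α_t. Then for all f ∈ L²₀(M₁), ⟨f, (I - Ŝ) f⟩ ≥ ⟨f, (I - S) f⟩ / (2t). -/
/-!
Multiplying the hypothesis by `‖f‖²` gives `t ⟪f, (I - Ŝ) f⟫ ≥ ⟪f, ((1 - α) I - S) f⟫`.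
Since `⟪f, S f⟫ ≤ ‖S‖ ‖f‖² ≤ (1 - 2α) ‖f‖²`, the operator `(1 - 2α) I - S` is positive on the
diagonal, i.e. `⟪f, ((1 - α) I - S) f⟫ ≥ ⟪f, (I - S) f⟫ / 2`.
-/

open scoped RealInnerProductSpace

section
variable {H : Type*} [NormedAddCommGroup H] [InnerProductSpace ℝ H]

theorem real_inner_apply_self_le_opNorm_mul_sq (T : H →L[ℝ] H) (f : H) :
    ⟪f, T f⟫ ≤ ‖T‖ * ‖f‖ ^ 2 :=
  calc ⟪f, T f⟫ ≤ ‖f‖ * ‖T f‖ := real_inner_le_norm f (T f)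
    _ ≤ ‖f‖ * (‖T‖ * ‖f‖) := by gcongr; exact T.le_opNorm f
    _ = ‖T‖ * ‖f‖ ^ 2 := by ring

theorem real_inner_smul_one_sub_apply_self (c : ℝ) (T : H →L[ℝ] H) (f : H) :
    ⟪f, (c • (1 : H →L[ℝ] H) - T) f⟫ = c * ‖f‖ ^ 2 - ⟪f, T f⟫ := by
  simp [inner_sub_right, inner_smul_right]

theorem real_inner_one_sub_apply_self (T : H →L[ℝ] H) (f : H) :
    ⟪f, ((1 : H →L[ℝ] H) - T) f⟫ = ‖f‖ ^ 2 - ⟪f, T f⟫ := by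
  simpa using real_inner_smul_one_sub_apply_self 1 T f

theorem real_inner_one_sub_apply_self_div_two_le (S : H →L[ℝ] H) {α : ℝ}
    (hα : α ≤ (1 - ‖S‖) / 2) (f : H) :
    ⟪f, ((1 : H →L[ℝ] H) - S) f⟫ / 2 ≤ ⟪f, ((1 - α) • (1 : H →L[ℝ] H) - S) f⟫ := by
  rw [real_inner_one_sub_apply_self, real_inner_smul_one_sub_apply_self]
  have hαf := mul_le_mul_of_nonneg_right hα (sq_nonneg ‖f‖)
  linarith [real_inner_apply_self_le_opNorm_mul_sq S f]

end

theorem hybrid_da_quadratic_form_bound_general {H : Type*} [NormedAddCommGroup H]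
    [InnerProductSpace ℝ H] (S Shat : H →L[ℝ] H)
    (t : ℕ) (ht : 0 < t) (α : ℝ)
    (hα : α ≤ (1 - ‖S‖) / 2)
    (hyp : ∀ f : H, f ≠ 0 →
      (t : ℝ) * (1 - ⟪f, Shat f⟫ / ‖f‖ ^ 2) ≥ 1 - ⟪f, S f⟫ / ‖f‖ ^ 2 - α) :
    ∀ f : H, ⟪f, ((1 : H →L[ℝ] H) - Shat) f⟫ ≥ ⟪f, ((1 : H →L[ℝ] H) - S) f⟫ / (2 * t) := by
  intro f
  rcases eq_or_ne f 0 with rfl | hf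
  · simp
  have hgap : ⟪f, ((1 - α) • (1 : H →L[ℝ] H) - S) f⟫ ≤
      t * ⟪f, ((1 : H →L[ℝ] H) - Shat) f⟫ := by
    have hyp' := mul_le_mul_of_nonneg_left (hyp f hf) (sq_nonneg ‖f‖)
    rw [real_inner_one_sub_apply_self, real_inner_smul_one_sub_apply_self]
    field_simp at hyp'
    linarith
  have hhalf := real_inner_one_sub_apply_self_div_two_le S hα f
  rw [ge_iff_le, div_le_iff₀ (by positivity)]
  linarith

/-- If `α_t ≤ (1 - ‖S‖)/2` with `‖S‖ < 1`, and the quadratic-form gap inequality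
`t(1 - ⟪f, Ŝf⟫/‖f‖²) ≥ 1 - ⟪f, Sf⟫/‖f‖² - α_t` holds for all nonzero `f`, then
`⟪f, (I - Ŝ) f⟫ ≥ ⟪f, (I - S) f⟫ / (2t)` for all `f`. -/
theorem hybrid_da_quadratic_form_bound {H : Type*} [NormedAddCommGroup H]
    [InnerProductSpace ℝ H] [CompleteSpace H] (S Shat : H →L[ℝ] H)
    (hS : IsSelfAdjoint S) (hShat : IsSelfAdjoint Shat)
    (hSnorm : ‖S‖ < 1) (hShatnorm : ‖Shat‖ ≤ 1)
    (t : ℕ) (ht : 0 < t) (α : ℝ) (hα₀ : α ∈ Set.Icc (0 : ℝ) 1)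
    (hα : α ≤ (1 - ‖S‖) / 2)
    (hyp : ∀ f : H, f ≠ 0 →
      (t : ℝ) * (1 - ⟪f, Shat f⟫ / ‖f‖ ^ 2) ≥ 1 - ⟪f, S f⟫ / ‖f‖ ^ 2 - α) :
    ∀ f : H, ⟪f, ((1 : H →L[ℝ] H) - Shat) f⟫ ≥ ⟪f, ((1 : H →L[ℝ] H) - S) f⟫ / (2 * t) :=
  hybrid_da_quadratic_form_bound_general S Shat t ht α hα hyp
end

section
/- Let γ : (0, M) → [0, 1] be measurable on a bounded interval (0, M), with γ(z) < 1 for almost every z, and γ(z) ≤ γ₀ < 1 for all z ∈ (0, ε] for some ε > 0. Define β_t = sup_{m ∈ (0, M)} [ (1/m) ∫₀^m γ(z)^{2t} dz ]^{1/2}. Then β_t → 0 as t → ∞. -/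
/-!
The average of `γ^{2t}` over `(0, m)` is at most `max(γ₀, 0)^{2t}` when `m ≤ ε`, and at most
`(1/ε) ∫₀^M γ^{2t}` when `m ≥ ε`. Both bounds are uniform in `m` and tend to `0`: the second by
dominated convergence, since `|γ| < 1` almost everywhere on `(0, M)`.
-/

open MeasureTheory Filter Set Topology

section PowIntegral

variable {α : Type*} [MeasurableSpace α] {μ : Measure α} {g : α → ℝ}

theorem norm_pow_le_one_of_abs_le_one {x : ℝ} (hx : |x| ≤ 1) (n : ℕ) : ‖x ^ n‖ ≤ 1 := by
  simpa [abs_pow] using pow_le_one₀ (abs_nonneg x) hx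

theorem integrable_pow_of_abs_le_one [IsFiniteMeasure μ] (hg : AEStronglyMeasurable g μ)
    (h : ∀ᵐ x ∂μ, |g x| ≤ 1) (n : ℕ) : Integrable (fun x => g x ^ n) μ :=
  (integrable_const 1).mono' (hg.pow n) (h.mono fun _ hx => norm_pow_le_one_of_abs_le_one hx n)

theorem tendsto_integral_pow_of_abs_lt_one [IsFiniteMeasure μ] (hg : AEStronglyMeasurable g μ)
    (h : ∀ᵐ x ∂μ, |g x| < 1) : Tendsto (fun n : ℕ => ∫ x, g x ^ n ∂μ) atTop (𝓝 0) := by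
  simpa using tendsto_integral_of_dominated_convergence (fun _ => 1) (fun n => hg.pow n)
    (integrable_const 1) (fun n => h.mono fun _ hx => norm_pow_le_one_of_abs_le_one hx.le n)
    (h.mono fun _ hx => tendsto_pow_atTop_nhds_zero_of_abs_lt_one hx)

end PowIntegral

section InitialAverage

variable {f : ℝ → ℝ} {ε m M a : ℝ}

theorem one_div_mul_setIntegral_Ioo_le (hm : 0 < m) (hf : IntegrableOn f (Ioo 0 m))
    (hfa : ∀ z ∈ Ioo 0 m, f z ≤ a) : 1 / m * ∫ z in Ioo 0 m, f z ≤ a := by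
  have hint : ∫ z in Ioo 0 m, f z ≤ m * a := by
    calc ∫ z in Ioo 0 m, f z ≤ ∫ _ in Ioo 0 m, a :=
          setIntegral_mono_on hf (integrableOn_const measure_Ioo_lt_top.ne) measurableSet_Ioo hfa
      _ = m * a := by rw [setIntegral_const, Real.volume_real_Ioo_of_le hm.le, sub_zero, smul_eq_mul]
  calc 1 / m * ∫ z in Ioo 0 m, f z ≤ 1 / m * (m * a) := by gcongr
    _ = a := by field_simp

theorem one_div_mul_setIntegral_Ioo_le_of_le (hε : 0 < ε) (hεm : ε ≤ m) (hmM : m ≤ M)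
    (hf : IntegrableOn f (Ioo 0 M)) (hf0 : 0 ≤ f) :
    1 / m * ∫ z in Ioo 0 m, f z ≤ 1 / ε * ∫ z in Ioo 0 M, f z := by
  have hsub : Ioo 0 m ⊆ Ioo 0 M := Ioo_subset_Ioo_right hmM
  exact mul_le_mul (one_div_le_one_div_of_le hε hεm)
    (setIntegral_mono_set hf (Eventually.of_forall hf0) hsub.eventuallyLE)
    (setIntegral_nonneg measurableSet_Ioo fun z _ => hf0 z) (one_div_pos.2 hε).le

theorem one_div_mul_setIntegral_Ioo_le_max (hε : 0 < ε) (hm : m ∈ Ioo 0 M)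
    (hf : IntegrableOn f (Ioo 0 M)) (hf0 : 0 ≤ f) (hfa : ∀ z ∈ Ioo 0 M, z ≤ ε → f z ≤ a) :
    1 / m * ∫ z in Ioo 0 m, f z ≤ max a (1 / ε * ∫ z in Ioo 0 M, f z) := by
  have hsub : Ioo 0 m ⊆ Ioo 0 M := Ioo_subset_Ioo_right hm.2.le
  rcases le_total m ε with hmε | hεm
  · refine le_max_of_le_left (one_div_mul_setIntegral_Ioo_le hm.1 (hf.mono_set hsub) ?_)
    exact fun z hz => hfa z (hsub hz) (hz.2.le.trans hmε)
  · exact le_max_of_le_right (one_div_mul_setIntegral_Ioo_le_of_le hε hεm hm.2.le hf hf0)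

end InitialAverage

theorem beta_t_tendsto_zero_general (M : ℝ) (γ : ℝ → ℝ) (hmeas : Measurable γ)
    (hrange : ∀ z ∈ Set.Ioo (0 : ℝ) M, γ z ∈ Set.Icc (0 : ℝ) 1)
    (hae : ∀ᵐ z ∂(volume.restrict (Set.Ioo (0 : ℝ) M)), γ z < 1)
    (γ₀ ε : ℝ) (hγ₀ : γ₀ < 1) (hε : 0 < ε)
    (hsmall : ∀ z ∈ Set.Ioc (0 : ℝ) ε, γ z ≤ γ₀) :
    Filter.Tendsto
      (fun t : ℕ => ⨆ m : Set.Ioo (0 : ℝ) M,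
        Real.sqrt ((1 / (m : ℝ)) * ∫ z in Set.Ioo (0 : ℝ) (m : ℝ), γ z ^ (2 * t)))
      Filter.atTop (nhds 0) := by
  set c := max γ₀ 0
  have h2t : Tendsto (fun t : ℕ => 2 * t) atTop atTop := tendsto_id.const_mul_atTop' two_pos
  have hrange_ae : ∀ᵐ z ∂(volume.restrict (Ioo 0 M)), γ z ∈ Icc 0 1 :=
    (ae_restrict_mem measurableSet_Ioo).mono hrange
  have habs : ∀ᵐ z ∂(volume.restrict (Ioo 0 M)), |γ z| < 1 := by
    filter_upwards [hae, hrange_ae] with z hz hz' using abs_lt.2 ⟨by linarith [hz'.1], hz⟩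
  have hint (n : ℕ) : IntegrableOn (fun z => γ z ^ n) (Ioo 0 M) :=
    integrable_pow_of_abs_le_one hmeas.aestronglyMeasurable (habs.mono fun _ hz => hz.le) n
  have hbound (t : ℕ) (m : Ioo 0 M) :
      1 / (m : ℝ) * ∫ z in Ioo 0 (m : ℝ), γ z ^ (2 * t)
        ≤ max (c ^ (2 * t)) (1 / ε * ∫ z in Ioo 0 M, γ z ^ (2 * t)) :=
    one_div_mul_setIntegral_Ioo_le_max hε m.2 (hint _) (fun z => (even_two_mul t).pow_nonneg _)
      fun z hz hzε => pow_le_pow_left₀ (hrange z hz).1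
        ((hsmall z ⟨hz.1, hzε⟩).trans (le_max_left _ _)) _
  have hc : Tendsto (fun t : ℕ => c ^ (2 * t)) atTop (𝓝 0) :=
    (tendsto_pow_atTop_nhds_zero_of_lt_one (le_max_right _ _) (max_lt hγ₀ one_pos)).comp h2t
  have hA : Tendsto (fun t : ℕ => 1 / ε * ∫ z in Ioo 0 M, γ z ^ (2 * t)) atTop (𝓝 0) := by
    simpa using ((tendsto_integral_pow_of_abs_lt_one
      hmeas.aestronglyMeasurable habs).comp h2t).const_mul (1 / ε)
  have hmax := (hc.max hA).sqrt
  rw [max_self, Real.sqrt_zero] at hmax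
  refine squeeze_zero (fun t => Real.iSup_nonneg fun _ => Real.sqrt_nonneg _) (fun t => ?_) hmax
  exact Real.iSup_le (fun m => Real.sqrt_le_sqrt (hbound t m)) (Real.sqrt_nonneg _)

/-- If `γ : (0,M) → [0,1]` satisfies `γ < 1` a.e. and `γ ≤ γ₀ < 1` on `(0, ε]`, then
`β_t = sup_{m ∈ (0,M)} [(1/m)∫₀^m γ^{2t}]^{1/2} → 0` as `t → ∞`. -/
theorem beta_t_tendsto_zero (M : ℝ) (hM : 0 < M) (γ : ℝ → ℝ) (hmeas : Measurable γ)
    (hrange : ∀ z ∈ Set.Ioo (0 : ℝ) M, γ z ∈ Set.Icc (0 : ℝ) 1)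
    (hae : ∀ᵐ z ∂(volume.restrict (Set.Ioo (0 : ℝ) M)), γ z < 1)
    (γ₀ ε : ℝ) (hγ₀ : γ₀ < 1) (hε : 0 < ε)
    (hsmall : ∀ z ∈ Set.Ioc (0 : ℝ) ε, γ z ≤ γ₀) :
    Filter.Tendsto
      (fun t : ℕ => ⨆ m : Set.Ioo (0 : ℝ) M,
        Real.sqrt ((1 / (m : ℝ)) * ∫ z in Set.Ioo (0 : ℝ) (m : ℝ), γ z ^ (2 * t)))
      Filter.atTop (nhds 0) :=
  beta_t_tendsto_zero_general M γ hmeas hrange hae γ₀ ε hγ₀ hε hsmall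
end

section
/- Let V : H₁ → H₂ be a bounded linear map between Hilbert spaces with adjoint V*, and suppose ⟨Vf, Vf⟩_{H₂} = ⟨f, f⟩_{H₁} for all f ∈ H₁ (V is an isometry). Let Q be a bounded self-adjoint operator on H₂, and let t be a positive integer. If t is even or Q is positive semi-definite, then for all nonzero f ∈ H₁: 0 ≤ (⟨f, V*QV f⟩_{H₁}/‖f‖²)^t ≤ ⟨f, V*Q^tV f⟩_{H₁}/‖f‖². -/
open scoped RealInnerProductSpace

/-!
Since `⟪f, V*QᵏV f⟫ / ‖f‖² = ⟪g, Qᵏ g⟫` for the unit vector `g = V f / ‖f‖`, it suffices to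
bound the moments `a k = ⟪g, Qᵏ g⟫`. For positive `Q` they satisfy `a 0 = 1`, `a k ≥ 0` and
`a (k+1)² ≤ a k · a (k+2)`: Cauchy–Schwarz for the positive form `(x, y) ↦ ⟪x, Qᵏ y⟫` at
`x = g`, `y = Q g`. This log-convexity gives `a 1 · a k ≤ a (k+1)`, hence `a 1 ^ t ≤ a t`.
For even `t` and merely self-adjoint `Q`, apply this to the positive operator `Q²`, after
`⟪g, Q g⟫² ≤ ⟪g, Q² g⟫`.
-/

section LogConvexSequence

variable {a : ℕ → ℝ} (h₀ : a 0 = 1) (hnonneg : ∀ k, 0 ≤ a k)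
  (hsq : ∀ k, a (k + 1) ^ 2 ≤ a k * a (k + 2))
include h₀ hnonneg hsq

theorem mul_le_succ_of_sq_succ_le_mul (k : ℕ) : a 1 * a k ≤ a (k + 1) := by
  induction k with
  | zero => simp [h₀]
  | succ k ih =>
    rcases (hnonneg k).eq_or_lt with hk | hk
    · have hsucc : a (k + 1) = 0 := pow_eq_zero_iff two_ne_zero |>.mp <|
        le_antisymm (by simpa [← hk] using hsq k) (sq_nonneg _)
      simpa [hsucc] using hnonneg (k + 2)
    · refine le_of_mul_le_mul_left ?_ hk
      nlinarith [hsq k, mul_le_mul_of_nonneg_right ih (hnonneg (k + 1))]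

theorem pow_le_of_sq_succ_le_mul (k : ℕ) : a 1 ^ k ≤ a k := by
  induction k with
  | zero => simp [h₀]
  | succ k ih =>
    calc a 1 ^ (k + 1) = a 1 * a 1 ^ k := pow_succ' _ _
      _ ≤ a 1 * a k := mul_le_mul_of_nonneg_left ih (hnonneg 1)
      _ ≤ a (k + 1) := mul_le_succ_of_sq_succ_le_mul h₀ hnonneg hsq k

end LogConvexSequence

namespace ContinuousLinearMap

variable {H : Type*} [NormedAddCommGroup H] [InnerProductSpace ℝ H]

theorem IsPositive.inner_sq_le_inner_mul_inner {P : H →L[ℝ] H} (hP : P.IsPositive) (x y : H) :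
    ⟪x, P y⟫ ^ 2 ≤ ⟪x, P x⟫ * ⟪y, P y⟫ := by
  have h := LinearMap.BilinForm.apply_mul_apply_le_of_forall_zero_le
    ((innerₗ H).compl₂ (P : H →ₗ[ℝ] H)) hP.inner_nonneg_right x y
  simp only [LinearMap.compl₂_apply, coe_coe, innerₗ_apply_apply] at h
  rwa [real_inner_comm, ← hP.inner_left_eq_inner_right, real_inner_comm, ← sq] at h

variable [CompleteSpace H]

theorem _root_.IsSelfAdjoint.isPositive_sq {Q : H →L[ℝ] H} (hQ : IsSelfAdjoint Q) :
    (Q ^ 2).IsPositive := by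
  have h := isPositive_adjoint_comp_self Q
  rwa [hQ.adjoint_eq, ← mul_def, ← sq] at h

theorem IsPositive.pow {Q : H →L[ℝ] H} (hQ : Q.IsPositive) (k : ℕ) : (Q ^ k).IsPositive := by
  induction k using Nat.twoStepInduction with
  | zero => simp
  | one => simpa using hQ
  | more k ih _ =>
    have h := ih.adjoint_conj Q
    rwa [hQ.isSelfAdjoint.adjoint_eq, ← mul_def, ← mul_def, ← mul_assoc, ← pow_succ',
      ← pow_succ] at h

theorem _root_.IsSelfAdjoint.inner_pow_succ_sq_le {Q : H →L[ℝ] H} (hQ : IsSelfAdjoint Q)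
    {m : ℕ} (hm : (Q ^ m).IsPositive) (g : H) :
    ⟪g, (Q ^ (m + 1)) g⟫ ^ 2 ≤ ⟪g, (Q ^ m) g⟫ * ⟪g, (Q ^ (m + 2)) g⟫ := by
  have h := hm.inner_sq_le_inner_mul_inner g (Q g)
  have hQg : ∀ z, ⟪Q g, z⟫ = ⟪g, Q z⟫ := hQ.isSymmetric g
  have h₁ : (Q ^ (m + 1)) g = (Q ^ m) (Q g) := by rw [pow_succ]; rfl
  have h₂ : (Q ^ (m + 2)) g = Q ((Q ^ m) (Q g)) := by rw [pow_succ, pow_succ']; rfl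
  rwa [h₁, h₂, ← hQg]

theorem IsPositive.inner_pow_le_inner_pow_apply {Q : H →L[ℝ] H} (hQ : Q.IsPositive) {g : H}
    (hg : ‖g‖ = 1) (t : ℕ) : ⟪g, Q g⟫ ^ t ≤ ⟪g, (Q ^ t) g⟫ := by
  simpa using pow_le_of_sq_succ_le_mul (a := fun k ↦ ⟪g, (Q ^ k) g⟫)
    (by simp [hg]) (fun k ↦ (hQ.pow k).inner_nonneg_right g)
    (fun k ↦ hQ.isSelfAdjoint.inner_pow_succ_sq_le (hQ.pow k) g) t

theorem _root_.IsSelfAdjoint.inner_pow_le_inner_pow_apply_of_even {Q : H →L[ℝ] H}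
    (hQ : IsSelfAdjoint Q) {g : H} (hg : ‖g‖ = 1) {t : ℕ} (ht : Even t) :
    ⟪g, Q g⟫ ^ t ≤ ⟪g, (Q ^ t) g⟫ := by
  obtain ⟨s, rfl⟩ := ht
  have hsq : ⟪g, Q g⟫ ^ 2 ≤ ⟪g, (Q ^ 2) g⟫ := by
    simpa [real_inner_self_eq_norm_sq, hg] using hQ.inner_pow_succ_sq_le (m := 0) (by simp) g
  calc ⟪g, Q g⟫ ^ (s + s) = (⟪g, Q g⟫ ^ 2) ^ s := by rw [← pow_mul, two_mul]
    _ ≤ ⟪g, (Q ^ 2) g⟫ ^ s := pow_le_pow_left₀ (sq_nonneg _) hsq s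
    _ ≤ ⟪g, ((Q ^ 2) ^ s) g⟫ := hQ.isPositive_sq.inner_pow_le_inner_pow_apply hg s
    _ = ⟪g, (Q ^ (s + s)) g⟫ := by rw [← pow_mul, two_mul]

end ContinuousLinearMap

theorem inner_adjoint_apply_div_norm_sq {E F : Type*}
    [NormedAddCommGroup E] [InnerProductSpace ℝ E] [CompleteSpace E]
    [NormedAddCommGroup F] [InnerProductSpace ℝ F] [CompleteSpace F]
    (V : E →L[ℝ] F) (T : F →L[ℝ] F) (f : E) :
    ⟪f, (ContinuousLinearMap.adjoint V) (T (V f))⟫ / ‖f‖ ^ 2 =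
      ⟪‖f‖⁻¹ • V f, T (‖f‖⁻¹ • V f)⟫ := by
  rw [ContinuousLinearMap.adjoint_inner_right, map_smul, real_inner_smul_left,
    real_inner_smul_right]
  ring

theorem isometry_spectral_jensen_general {H₁ H₂ : Type*}
    [NormedAddCommGroup H₁] [InnerProductSpace ℝ H₁] [CompleteSpace H₁]
    [NormedAddCommGroup H₂] [InnerProductSpace ℝ H₂] [CompleteSpace H₂]
    (V : H₁ →L[ℝ] H₂) (hV : ∀ f : H₁, ⟪V f, V f⟫ = ⟪f, f⟫)
    (Q : H₂ →L[ℝ] H₂) (hQ : IsSelfAdjoint Q)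
    (t : ℕ) (hcase : Even t ∨ ∀ g : H₂, 0 ≤ ⟪g, Q g⟫) :
    ∀ f : H₁, f ≠ 0 →
      0 ≤ (⟪f, (ContinuousLinearMap.adjoint V) (Q (V f))⟫ / ‖f‖ ^ 2) ^ t ∧
        (⟪f, (ContinuousLinearMap.adjoint V) (Q (V f))⟫ / ‖f‖ ^ 2) ^ t ≤
          ⟪f, (ContinuousLinearMap.adjoint V) ((Q ^ t) (V f))⟫ / ‖f‖ ^ 2 := by
  intro f hf
  have hVf : ‖V f‖ = ‖f‖ := by rw [norm_eq_sqrt_real_inner, hV, ← norm_eq_sqrt_real_inner]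
  have hg : ‖‖f‖⁻¹ • V f‖ = 1 := by
    rw [norm_smul, norm_inv, norm_norm, hVf, inv_mul_cancel₀ (norm_ne_zero_iff.mpr hf)]
  rw [inner_adjoint_apply_div_norm_sq, inner_adjoint_apply_div_norm_sq]
  rcases hcase with ht | hpos
  · exact ⟨ht.pow_nonneg _, hQ.inner_pow_le_inner_pow_apply_of_even hg ht⟩
  · have hQ' : Q.IsPositive := (ContinuousLinearMap.isPositive_iff' Q).mpr
      ⟨hQ, fun x ↦ real_inner_comm x (Q x) ▸ hpos x⟩
    exact ⟨pow_nonneg (hpos _) t, hQ'.inner_pow_le_inner_pow_apply hg t⟩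

/-- Spectral-Jensen inequality conjugated by an isometry: for an isometric `V : H₁ → H₂`
with adjoint `V*`, a bounded self-adjoint `Q` on `H₂`, and a positive integer `t` that is
even or with `Q` positive semi-definite,
`0 ≤ (⟪f, V*QV f⟫/‖f‖²)^t ≤ ⟪f, V*QᵗV f⟫/‖f‖²` for all nonzero `f`. -/
theorem isometry_spectral_jensen {H₁ H₂ : Type*}
    [NormedAddCommGroup H₁] [InnerProductSpace ℝ H₁] [CompleteSpace H₁]
    [NormedAddCommGroup H₂] [InnerProductSpace ℝ H₂] [CompleteSpace H₂]
    (V : H₁ →L[ℝ] H₂) (hV : ∀ f : H₁, ⟪V f, V f⟫ = ⟪f, f⟫)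
    (Q : H₂ →L[ℝ] H₂) (hQ : IsSelfAdjoint Q)
    (t : ℕ) (ht : 0 < t) (hcase : Even t ∨ ∀ g : H₂, 0 ≤ ⟪g, Q g⟫) :
    ∀ f : H₁, f ≠ 0 →
      0 ≤ (⟪f, (ContinuousLinearMap.adjoint V) (Q (V f))⟫ / ‖f‖ ^ 2) ^ t ∧
        (⟪f, (ContinuousLinearMap.adjoint V) (Q (V f))⟫ / ‖f‖ ^ 2) ^ t ≤
          ⟪f, (ContinuousLinearMap.adjoint V) ((Q ^ t) (V f))⟫ / ‖f‖ ^ 2 :=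
  isometry_spectral_jensen_general V hV Q hQ t hcase
end

section
/- Let v(z) = (1-z)^{d-1}/d! on (0,1) with d ≥ 2. Then v'(z) < 0 on (0,1), and the function z ↦ z v'(z)/v(z)^{1 - 1/k} is decreasing on (0,1) when k = d - 1. -/
/-! With `n = d - 1`, `v(z) = (1 - z)^n / d!` and `v^{1 - 1/n} = (1 - z)^{n-1} / (d!)^{1 - 1/n}`,
which is exactly the power of `1 - z` appearing in `v'`. Hence `z v'(z) / v(z)^{1 - 1/n}` is the
linear function `-(n / (d!)^{1/n}) z`, which is strictly decreasing. -/

open Set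

theorem pow_rpow_one_sub_inv_natCast {w : ℝ} (hw : 0 ≤ w) {n : ℕ} (hn : n ≠ 0) :
    (w ^ n) ^ (1 - 1 / (n : ℝ)) = w ^ (n - 1) := by
  rw [← Real.rpow_natCast_mul hw, mul_one_sub, mul_one_div_cancel (by exact_mod_cast hn),
    ← Nat.cast_pred (Nat.pos_of_ne_zero hn), Real.rpow_natCast]

theorem deriv_one_sub_pow_div (n : ℕ) (c z : ℝ) :
    deriv (fun z : ℝ => (1 - z) ^ n / c) z = -(n * (1 - z) ^ (n - 1)) / c := by
  have h := (((hasDerivAt_id z).const_sub 1).pow n).div_const c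
  simp only [id, mul_neg_one] at h
  exact h.deriv

section OneSubPowDiv

variable {n : ℕ} {c : ℝ}

theorem deriv_one_sub_pow_div_neg (hn : n ≠ 0) (hc : 0 < c) {z : ℝ} (hz : z < 1) :
    deriv (fun z : ℝ => (1 - z) ^ n / c) z < 0 := by
  have hw : 0 < 1 - z := sub_pos.mpr hz
  rw [deriv_one_sub_pow_div]
  have : 0 < (n : ℝ) * (1 - z) ^ (n - 1) := by positivity
  exact div_neg_of_neg_of_pos (neg_neg_of_pos this) hc

theorem mul_deriv_one_sub_pow_div_div_rpow (hn : n ≠ 0) (hc : 0 < c) {z : ℝ} (hz : z < 1) :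
    z * deriv (fun z : ℝ => (1 - z) ^ n / c) z / ((1 - z) ^ n / c) ^ (1 - 1 / (n : ℝ)) =
      -(n / c ^ (1 / (n : ℝ))) * z := by
  have hw : 0 < 1 - z := sub_pos.mpr hz
  have hcn : 0 < c ^ (1 / (n : ℝ)) := Real.rpow_pos_of_pos hc _
  rw [deriv_one_sub_pow_div, Real.div_rpow (by positivity) hc.le,
    pow_rpow_one_sub_inv_natCast hw.le hn, Real.rpow_sub hc, Real.rpow_one]
  field_simp

theorem strictAntiOn_mul_deriv_one_sub_pow_div_div_rpow (hn : n ≠ 0) (hc : 0 < c) :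
    StrictAntiOn
      (fun z : ℝ => z * deriv (fun z : ℝ => (1 - z) ^ n / c) z /
        ((1 - z) ^ n / c) ^ (1 - 1 / (n : ℝ))) (Iio 1) := by
  have hslope : -(n / c ^ (1 / (n : ℝ))) < 0 := by
    have hn_pos : 0 < (n : ℝ) := by exact_mod_cast Nat.pos_of_ne_zero hn
    exact neg_neg_of_pos (div_pos hn_pos (Real.rpow_pos_of_pos hc _))
  refine ((strictAnti_mul_left hslope).strictAntiOn _).congr fun z hz => ?_
  exact (mul_deriv_one_sub_pow_div_div_rpow hn hc hz).symm

end OneSubPowDiv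

/-- For `v(z) = (1-z)^{d-1}/d!` on `(0,1)` with `d ≥ 2`: `v' < 0` on `(0,1)`, and
`z ↦ z v'(z)/v(z)^{1 - 1/(d-1)}` is decreasing on `(0,1)`. -/
theorem slice_sampler_density_monotonicity (d : ℕ) (hd : 2 ≤ d) :
    (∀ z ∈ Set.Ioo (0 : ℝ) 1,
      deriv (fun z : ℝ => (1 - z) ^ (d - 1) / (d.factorial : ℝ)) z < 0) ∧
    StrictAntiOn
      (fun z : ℝ =>
        z * deriv (fun z : ℝ => (1 - z) ^ (d - 1) / (d.factorial : ℝ)) z /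
          ((1 - z) ^ (d - 1) / (d.factorial : ℝ)) ^ ((1 : ℝ) - 1 / ((d : ℝ) - 1)))
      (Set.Ioo (0 : ℝ) 1) := by
  have hn : d - 1 ≠ 0 := by omega
  have hcast : (d : ℝ) - 1 = ((d - 1 : ℕ) : ℝ) := by
    rw [Nat.cast_sub (by omega : 1 ≤ d), Nat.cast_one]
  have hfact : (0 : ℝ) < d.factorial := by positivity
  rw [hcast]
  exact ⟨fun z hz => deriv_one_sub_pow_div_neg hn hfact hz.2,
    (strictAntiOn_mul_deriv_one_sub_pow_div_div_rpow hn hfact).mono fun z hz => hz.2⟩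
end
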